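/- Fix all parameters except the investment jump size, assume λI > 0, ρ > μI and h > 0 (h and A do not depend on mI). For an investment jump size m > −1 let r0(m) be the unique positive root of j with mI = m (then r0(m) > 1) and set q⋆(m) = r0(m)/((κ1 − κ0)·A·(r0(m) − 1)). Then the investment threshold is not monotone in mI: (a) if −1 < mI′ < mI″ ≤ 0 then q⋆(mI″) < q⋆(mI′) (strictly decreasing on (−1, 0]); (b) if 0 ≤ mI′ < mI″ then q⋆(mI′) < q⋆(mI″) (strictly increasing on [0, ∞)). -/

import Mathlib

/-!
For every `m > -1` the map `r ↦ j_m(r)` is convex, with `j_m(0) = μI - ρ < 0` and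
`j_m(1) = -h < 0`. A convex function is bounded on `[a, b]` by `max (f a) (f b)`, so `j_m < 0` on
`[0, 1]` and the positive root `r0(m)` exceeds `1`; by the same bound, roots of two such functions
are compared by evaluating one function at the other's root.
The dependence on `m` is `j_m(r) = λI (m (r - 1) + (1 + m) ^ (1 - r)) + (terms free of m)`, and for
`r > 1` this bracket decreases in `m` on `(-1, 0]` and increases on `[0, ∞)`. Hence `r0` increases
on `(-1, 0]` and decreases on `[0, ∞)`, and `q⋆ = r / ((κ1 - κ0) A (r - 1))` is decreasing in
`r > 1`.
-/

open Real Set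

lemma convexOn_rpow_mul_left {u : ℝ} (hu : 0 < u) (k : ℝ) :
    ConvexOn ℝ univ fun r : ℝ => u ^ (k * r) :=
  (convexOn_rpow_left hu).comp_linearMap (LinearMap.mul ℝ ℝ k)

lemma convexOn_rpow_one_sub {v : ℝ} (hv : 0 < v) :
    ConvexOn ℝ univ fun r : ℝ => v ^ (1 - r) := by
  simpa [Function.comp_def, ← sub_eq_add_neg] using
    ((convexOn_rpow_left hv).translate_right 1).comp_linearMap (LinearMap.mul ℝ ℝ (-1))

lemma convexOn_quadratic_add_rpow {a p q u v : ℝ} (ha : 0 ≤ a) (hp : 0 ≤ p) (hq : 0 ≤ q)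
    (hu : 0 < u) (hv : 0 < v) (b c k : ℝ) :
    ConvexOn ℝ univ fun r : ℝ => a * r ^ 2 + b * r + c + p * u ^ (k * r) + q * v ^ (1 - r) :=
  ((((even_two.convexOn_pow.smul ha).add
    ((LinearMap.mul ℝ ℝ b).convexOn convex_univ)).add_const c).add
    ((convexOn_rpow_mul_left hu k).smul hp)).add ((convexOn_rpow_one_sub hv).smul hq)

lemma ConvexOn.lt_of_max_lt {s : Set ℝ} {f : ℝ → ℝ} (hf : ConvexOn ℝ s f) {a b x : ℝ}
    (ha : a ∈ s) (hb : b ∈ s) (hax : a ≤ x) (h : max (f a) (f b) < f x) : b < x := by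
  by_contra! hxb
  exact (hf.le_on_segment ha hb (segment_eq_Icc (hax.trans hxb) ▸ ⟨hax, hxb⟩)).not_gt h

lemma hasDerivAt_mul_sub_one_add_rpow_one_sub (r : ℝ) {m : ℝ} (hm : -1 < m) :
    HasDerivAt (fun m : ℝ => m * (r - 1) + (1 + m) ^ (1 - r))
      ((r - 1) * (1 - (1 + m) ^ (-r))) m := by
  have h1 : HasDerivAt (fun m : ℝ => m * (r - 1)) (r - 1) m := by
    simpa using (hasDerivAt_id m).mul_const (r - 1)
  have h2 : HasDerivAt (fun m : ℝ => (1 + m) ^ (1 - r)) ((1 - r) * (1 + m) ^ (-r)) m := by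
    simpa [show 1 - r - 1 = -r by ring] using
      ((hasDerivAt_id m).const_add 1).rpow_const (p := 1 - r)
        (Or.inl (ne_of_gt (by simp only [id]; linarith)))
  exact (h1.add h2).congr_deriv (by ring)

lemma strictAntiOn_mul_sub_one_add_rpow_one_sub {r : ℝ} (hr : 1 < r) :
    StrictAntiOn (fun m : ℝ => m * (r - 1) + (1 + m) ^ (1 - r)) (Ioc (-1) 0) := by
  refine strictAntiOn_of_deriv_neg (convex_Ioc _ _)
    (fun m hm => (hasDerivAt_mul_sub_one_add_rpow_one_sub r hm.1).continuousAt.continuousWithinAt)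
    fun m hm => ?_
  rw [interior_Ioc] at hm
  rw [(hasDerivAt_mul_sub_one_add_rpow_one_sub r hm.1).deriv]
  have h1 : 1 < (1 + m) ^ (-r) :=
    one_lt_rpow_of_pos_of_lt_one_of_neg (by linarith [hm.1]) (by linarith [hm.2]) (by linarith)
  exact mul_neg_of_pos_of_neg (by linarith) (by linarith)

lemma strictMonoOn_mul_sub_one_add_rpow_one_sub {r : ℝ} (hr : 1 < r) :
    StrictMonoOn (fun m : ℝ => m * (r - 1) + (1 + m) ^ (1 - r)) (Ici 0) := by
  refine strictMonoOn_of_deriv_pos (convex_Ici _)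
    (fun m hm => (hasDerivAt_mul_sub_one_add_rpow_one_sub r
      (by linarith [mem_Ici.1 hm])).continuousAt.continuousWithinAt) fun m hm => ?_
  rw [interior_Ici, mem_Ioi] at hm
  rw [(hasDerivAt_mul_sub_one_add_rpow_one_sub r (by linarith)).deriv]
  have h1 : (1 + m) ^ (-r) < 1 := rpow_lt_one_of_one_lt_of_neg (by linarith) (by linarith)
  exact mul_pos (by linarith) (by linarith)

lemma strictAntiOn_div_mul_sub_one {C : ℝ} (hC : 0 < C) :
    StrictAntiOn (fun x : ℝ => x / (C * (x - 1))) (Ioi 1) := by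
  intro x hx y hy hxy
  rw [mem_Ioi] at hx hy
  rw [div_lt_div_iff₀ (mul_pos hC (by linarith)) (mul_pos hC (by linarith))]
  nlinarith [mul_pos hC (sub_pos.2 hxy)]

theorem threshold_nonmonotone_in_mI_general (θ ρ μX σX lamX mX μI σI lamI n κ0 κ1 h A : ℝ)
    (hlamX : 0 ≤ lamX) (hmX : -1 < mX)
    (hlamI : 0 < lamI)
    (hκ : κ0 < κ1)
    (hρ : μI < ρ)
    (hh : h = ρ - (μX + (θ - 1) * σX ^ 2 / 2 - lamX * mX) * θ
      - lamX * ((1 + mX) ^ θ - 1))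
    (hhpos : 0 < h)
    (hA : A = Real.exp (-(h * n)) / h)
    (jm : ℝ → ℝ → ℝ)
    (hjm : ∀ m r : ℝ, jm m r = ((θ ^ 2 * σX ^ 2 + σI ^ 2) / 2) * r ^ 2
      + ((μX - σX ^ 2 / 2 - lamX * mX) * θ - (μI + σI ^ 2 / 2 - lamI * m)) * r
      + ((μI - lamI * m) - (lamX + lamI) - ρ)
      + lamX * (1 + mX) ^ (θ * r) + lamI * (1 + m) ^ (1 - r))
    (r0 : ℝ → ℝ)
    (hr0 : ∀ m : ℝ, -1 < m → 0 < r0 m ∧ jm m (r0 m) = 0) :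
    (∀ m : ℝ, -1 < m → 1 < r0 m)
    ∧ (∀ m1 m2 : ℝ, -1 < m1 → m1 < m2 → m2 ≤ 0 →
        r0 m2 / ((κ1 - κ0) * A * (r0 m2 - 1))
          < r0 m1 / ((κ1 - κ0) * A * (r0 m1 - 1)))
    ∧ (∀ m1 m2 : ℝ, 0 ≤ m1 → m1 < m2 →
        r0 m1 / ((κ1 - κ0) * A * (r0 m1 - 1))
          < r0 m2 / ((κ1 - κ0) * A * (r0 m2 - 1))) := by
  have hC : 0 < (κ1 - κ0) * A := mul_pos (sub_pos.2 hκ) (hA ▸ div_pos (exp_pos _) hhpos)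
  have hconv (m : ℝ) (hm : -1 < m) : ConvexOn ℝ univ (jm m) := by
    rw [show jm m = _ from funext (hjm m)]
    exact convexOn_quadratic_add_rpow (by positivity) hlamX hlamI.le
      (by linarith : (0 : ℝ) < 1 + mX) (by linarith : (0 : ℝ) < 1 + m) _ _ θ
  have hj0 (m : ℝ) : jm m 0 < 0 := by
    have : jm m 0 = μI - ρ := by
      rw [hjm]; simp only [mul_zero, zero_pow two_ne_zero, rpow_zero, sub_zero, rpow_one]; ring
    linarith
  have hj1 (m : ℝ) : jm m 1 < 0 := by
    have : jm m 1 = -h := by rw [hjm, hh]; simp only [mul_one, one_pow, sub_self, rpow_zero]; ring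
    linarith
  have hgt1 (m : ℝ) (hm : -1 < m) : 1 < r0 m :=
    (hconv m hm).lt_of_max_lt (mem_univ 0) (mem_univ 1) (hr0 m hm).1.le
      (by rw [(hr0 m hm).2]; exact max_lt (hj0 m) (hj1 m))
  have hdiff (m1 m2 : ℝ) (hm1 : -1 < m1) : jm m2 (r0 m1) =
      lamI * ((m2 * (r0 m1 - 1) + (1 + m2) ^ (1 - r0 m1))
        - (m1 * (r0 m1 - 1) + (1 + m1) ^ (1 - r0 m1))) := by
    rw [← sub_zero (jm m2 _), ← (hr0 m1 hm1).2, hjm, hjm]; ring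
  refine ⟨hgt1, fun m1 m2 hm1 h12 h20 => ?_, fun m1 m2 hm1 h12 => ?_⟩
  · have hm2 : -1 < m2 := hm1.trans h12
    have hneg : jm m2 (r0 m1) < 0 := by
      rw [hdiff m1 m2 hm1]
      exact mul_neg_of_pos_of_neg hlamI (sub_neg.2 (strictAntiOn_mul_sub_one_add_rpow_one_sub
        (hgt1 m1 hm1) ⟨hm1, h12.le.trans h20⟩ ⟨hm2, h20⟩ h12))
    have hlt : r0 m1 < r0 m2 := (hconv m2 hm2).lt_of_max_lt (mem_univ 1) (mem_univ _)
      (hgt1 m2 hm2).le (by rw [(hr0 m2 hm2).2]; exact max_lt (hj1 m2) hneg)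
    exact strictAntiOn_div_mul_sub_one hC (hgt1 m1 hm1) (hgt1 m2 hm2) hlt
  · have hm1' : -1 < m1 := by linarith
    have hm2 : -1 < m2 := by linarith
    have hpos : 0 < jm m2 (r0 m1) := by
      rw [hdiff m1 m2 hm1']
      exact mul_pos hlamI (sub_pos.2 (strictMonoOn_mul_sub_one_add_rpow_one_sub
        (hgt1 m1 hm1') hm1 (mem_Ici.2 (hm1.trans h12.le)) h12))
    have hlt : r0 m2 < r0 m1 := (hconv m2 hm2).lt_of_max_lt (mem_univ 1) (mem_univ _)
      (hgt1 m1 hm1').le (by rwa [(hr0 m2 hm2).2, max_eq_right (hj1 m2).le])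
    exact strictAntiOn_div_mul_sub_one hC (hgt1 m2 hm2) (hgt1 m1 hm1') hlt

/-- The investment threshold `q⋆(m) = r0(m)/((κ1-κ0) A (r0(m)-1))` is
not monotone in the investment jump size `mI = m`: it is strictly decreasing on
`(-1, 0]` and strictly increasing on `[0, ∞)` (assuming `λI > 0`, `ρ > μI`, `h > 0`). -/
theorem threshold_nonmonotone_in_mI (θ ρ μX σX lamX mX μI σI lamI n κ0 κ1 h A : ℝ)
    (hθ : 0 < θ) (hσX : 0 < σX) (hlamX : 0 ≤ lamX) (hmX : -1 < mX)
    (hσI : 0 < σI) (hlamI : 0 < lamI)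
    (hn : 0 ≤ n) (hκ0 : 0 < κ0) (hκ : κ0 < κ1)
    (hρ : μI < ρ)
    (hh : h = ρ - (μX + (θ - 1) * σX ^ 2 / 2 - lamX * mX) * θ
      - lamX * ((1 + mX) ^ θ - 1))
    (hhpos : 0 < h)
    (hA : A = Real.exp (-(h * n)) / h)
    (jm : ℝ → ℝ → ℝ)
    (hjm : ∀ m r : ℝ, jm m r = ((θ ^ 2 * σX ^ 2 + σI ^ 2) / 2) * r ^ 2
      + ((μX - σX ^ 2 / 2 - lamX * mX) * θ - (μI + σI ^ 2 / 2 - lamI * m)) * r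
      + ((μI - lamI * m) - (lamX + lamI) - ρ)
      + lamX * (1 + mX) ^ (θ * r) + lamI * (1 + m) ^ (1 - r))
    (r0 : ℝ → ℝ)
    (hr0 : ∀ m : ℝ, -1 < m → 0 < r0 m ∧ jm m (r0 m) = 0) :
    (∀ m : ℝ, -1 < m → 1 < r0 m)
    ∧ (∀ m1 m2 : ℝ, -1 < m1 → m1 < m2 → m2 ≤ 0 →
        r0 m2 / ((κ1 - κ0) * A * (r0 m2 - 1))
          < r0 m1 / ((κ1 - κ0) * A * (r0 m1 - 1)))
    ∧ (∀ m1 m2 : ℝ, 0 ≤ m1 → m1 < m2 →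
        r0 m1 / ((κ1 - κ0) * A * (r0 m1 - 1))
          < r0 m2 / ((κ1 - κ0) * A * (r0 m2 - 1))) :=
  threshold_nonmonotone_in_mI_general θ ρ μX σX lamX mX μI σI lamI n κ0 κ1 h A hlamX hmX hlamI hκ hρ
    hh hhpos hA jm hjm r0 hr0
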